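/- Let D(n) be the number of lists of 5n integers, each equal to 2 or −3, all of whose prefix sums are ≥ 0 and whose total sum is 0 (the Duchon numbers 1, 2, 23, …), and let f(t) = Σ_{n≥0} D(n) tⁿ ∈ ℤ⟦t⟧. Then 1 − f + 2t·f⁵ − t·f⁶ + t·f⁷ + t²·f¹⁰ = 0 in ℤ⟦t⟧. -/

import Mathlib

/-!
Let `A_j(t)` count the paths with steps `2`, `-3` that start at `0`, stay `≥ 0` and end at
height `j`, with `t` marking the length, and let `M(u) = ∑ A_j(t) u^j`. Removing the last step
gives the kernel equation `(u³ - t - t u⁵) M(u) = u³ - t (A₀ + A₁ u + A₂ u²)`. As `M` is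
invertible, the kernel is the cubic on the right times `M⁻¹`; the lower coefficients of the
cubic are divisible by `t`, so the recursion this imposes on the coefficients of `M⁻¹` makes all
but the first three of them divisible by every power of `t`, hence zero, and the kernel factors
as the cubic times a quadratic in `u`. Comparing coefficients and eliminating `A₁`, `A₂` gives an algebraic equation
for `c = t A₀`; finally `A₀(t) = f(t⁵)`, as an excursion has length divisible by `5`.
-/

open PowerSeries

/-- The ordinary generating function of the Duchon numbers: the coefficient of
`t^n` is the number of lists of `5n` integers, each equal to `2` or `-3`, all of
whose prefix sums are `≥ 0`, with total sum `0`. -/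
noncomputable def duchonGF : PowerSeries ℤ :=
  PowerSeries.mk fun n =>
    (Nat.card {l : List ℤ //
      l.length = 5 * n ∧
      (∀ x ∈ l, x = 2 ∨ x = -3) ∧
      (∀ i : ℕ, 0 ≤ (l.take i).sum) ∧
      l.sum = 0} : ℤ)

theorem List.forall_take_append_singleton_iff {α : Type*} (P : List α → Prop) (l : List α)
    (x : α) : (∀ i, P ((l ++ [x]).take i)) ↔ (∀ i, P (l.take i)) ∧ P (l ++ [x]) := by
  refine ⟨fun h => ⟨fun i => ?_, ?_⟩, fun ⟨hl, hlx⟩ i => ?_⟩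
  · rcases le_or_gt i l.length with hi | hi
    · simpa [List.take_append_of_le_length hi] using h i
    · simpa [List.take_of_length_le hi.le] using h l.length
  · simpa [List.take_of_length_le] using h (l.length + 1)
  · rcases le_or_gt i l.length with hi | hi
    · simpa [List.take_append_of_le_length hi] using hl i
    · rwa [List.take_of_length_le (by simpa using hi)]

theorem PowerSeries.trunc_three_eq {R : Type*} [Semiring R] (f : R⟦X⟧) :
    (trunc 3 f : R⟦X⟧) = C (coeff 0 f) + C (coeff 1 f) * X + C (coeff 2 f) * X ^ 2 := by
  simp [trunc_succ, monomial_eq_C_mul_X_pow]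

theorem PowerSeries.eq_zero_of_forall_eq_X_mul_sum {R : Type*} [CommSemiring R]
    {x p : ℕ → R⟦X⟧} {d : ℕ} (h : ∀ i, x i = X * ∑ k ∈ Finset.range d, p k * x (i + k + 1))
    (i : ℕ) : x i = 0 := by
  have hdvd : ∀ n i, X ^ n ∣ x i := by
    intro n
    induction n with
    | zero => simp
    | succ n ih =>
      intro i
      rw [h i, pow_succ']
      exact mul_dvd_mul_left X (Finset.dvd_sum fun k _ => (ih _).mul_left _)
  ext n
  simpa using X_pow_dvd_iff.1 (hdvd (n + 1) i) n n.lt_succ_self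

theorem eqns_of_kernel_factorization {S : Type*} [CommRing S] {t a b c n₀ n₁ n₂ : S}
    (h : (X ^ 3 - C t - C t * X ^ 5 : S⟦X⟧) =
      (X ^ 3 - C a * X ^ 2 - C b * X - C c) * (C n₀ + C n₁ * X + C n₂ * X ^ 2)) :
    (1 - t * a ^ 2 - t * b) * a = t * (a * b + c) ∧ (1 - t * a ^ 2 - t * b) * b = t * a * c ∧
      (1 - t * a ^ 2 - t * b) * c = t := by
  have hprod : (X ^ 3 - C a * X ^ 2 - C b * X - C c) * (C n₀ + C n₁ * X + C n₂ * X ^ 2) =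
      C n₂ * X ^ 5 + C (n₁ - a * n₂) * X ^ 4 + C (n₀ - a * n₁ - b * n₂) * X ^ 3 +
        C (-(a * n₀) - b * n₁ - c * n₂) * X ^ 2 + C (-(b * n₀) - c * n₁) * X + C (-(c * n₀)) := by
    simp only [map_sub, map_mul, map_neg]
    ring
  rw [hprod] at h
  have e0 := congrArg (coeff 0) h
  have e1 := congrArg (coeff 1) h
  have e2 := congrArg (coeff 2) h
  have e3 := congrArg (coeff 3) h
  have e4 := congrArg (coeff 4) h
  have e5 := congrArg (coeff 5) h
  clear h hprod
  simp only [map_add, map_sub, map_neg, sub_mul, neg_mul, mul_assoc, coeff_C_mul, coeff_C, coeff_X,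
    coeff_X_pow] at e0 e1 e2 e3 e4 e5
  norm_num at e0 e1 e2 e3 e4 e5
  obtain rfl : n₂ = -t := e5.symm
  obtain rfl : n₁ = -(a * t) := by linear_combination -e4
  obtain rfl : n₀ = 1 - t * a ^ 2 - t * b := by linear_combination -e3
  exact ⟨by linear_combination e2, by linear_combination e1, by linear_combination -e0⟩

theorem relation_of_kernel_eqns {S : Type*} [CommRing S] [IsDomain S] {t a b c : S}
    (ht : t ≠ 0) (hc : c ≠ 0) (ha : (1 - t * a ^ 2 - t * b) * a = t * (a * b + c))
    (hb : (1 - t * a ^ 2 - t * b) * b = t * a * c) (hct : (1 - t * a ^ 2 - t * b) * c = t) :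
    t ^ 2 * (1 + c ^ 5) ^ 2 - t * c * (1 + c ^ 5) + c ^ 7 = 0 := by
  have hD : 1 - t * a ^ 2 - t * b ≠ 0 := by
    intro h0
    rw [h0, zero_mul] at hct
    exact ht hct.symm
  have hb' : b = a * c ^ 2 := mul_left_cancel₀ hD (by linear_combination hb - a * c * hct)
  have ha' : a - a ^ 2 * c ^ 3 - c ^ 2 = 0 :=
    mul_left_cancel₀ ht (by linear_combination c * ha - a * hct + t * a * c * hb')
  have hs : c ^ 3 - t * (1 + c ^ 5) * a = 0 := by
    linear_combination c ^ 2 * hct - t * ha' + c ^ 3 * t * hb'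
  refine (mul_eq_zero.1 ?_).resolve_left (pow_ne_zero 2 hc)
  linear_combination -(t * (1 + c ^ 5)) ^ 2 * ha' +
    (c ^ 3 * (c ^ 3 + t * (1 + c ^ 5) * a) - t * (1 + c ^ 5)) * hs

def IsMeander (m : ℕ) (j : ℤ) (l : List ℤ) : Prop :=
  l.length = m ∧ (∀ x ∈ l, x = 2 ∨ x = -3) ∧ (∀ i : ℕ, 0 ≤ (l.take i).sum) ∧ l.sum = j

namespace IsMeander

variable {m : ℕ} {j : ℤ} {l : List ℤ}

theorem nonneg (h : IsMeander m j l) : 0 ≤ j := by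
  simpa [h.2.2.2] using h.2.2.1 l.length

theorem zero_iff : IsMeander 0 j l ↔ l = [] ∧ j = 0 := by
  constructor
  · rintro ⟨hlen, -, -, hsum⟩
    obtain rfl := List.eq_nil_of_length_eq_zero hlen
    exact ⟨rfl, hsum.symm⟩
  · rintro ⟨rfl, rfl⟩
    exact ⟨rfl, by simp, by simp, rfl⟩

theorem append_singleton_iff {x : ℤ} :
    IsMeander (m + 1) j (l ++ [x]) ↔ IsMeander m (j - x) l ∧ (x = 2 ∨ x = -3) ∧ 0 ≤ j := by
  simp only [IsMeander, List.length_append, List.length_singleton, List.mem_append,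
    List.mem_singleton, List.sum_append, List.sum_singleton]
  rw [List.forall_take_append_singleton_iff (fun l => 0 ≤ l.sum), List.sum_append,
    List.sum_singleton]
  constructor
  · rintro ⟨hlen, hsteps, ⟨hpre, hnn⟩, hsum⟩
    exact ⟨⟨by omega, fun y hy => hsteps y (.inl hy), hpre, by omega⟩,
      hsteps x (.inr rfl), by omega⟩
  · rintro ⟨⟨hlen, hsteps, hpre, hsum⟩, hx, hj⟩
    refine ⟨by omega, ?_, ⟨hpre, by omega⟩, by omega⟩
    rintro y (hy | rfl)
    exacts [hsteps y hy, hx]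

theorem modEq_two_mul (h : IsMeander m j l) : j ≡ 2 * m [ZMOD 5] := by
  obtain ⟨rfl, hsteps, -, rfl⟩ := h
  induction l with
  | nil => rfl
  | cons x l ih =>
    simp only [List.forall_mem_cons] at hsteps
    have := ih hsteps.2
    rcases hsteps.1 with rfl | rfl <;>
      simp only [Int.ModEq, List.sum_cons, List.length_cons] at this ⊢ <;> push_cast <;> omega

end IsMeander

noncomputable def meanderAppendStep (m : ℕ) {j : ℤ} (hj : 0 ≤ j) :
    {l // IsMeander m (j - 2) l} ⊕ {l // IsMeander m (j + 3) l} → {l // IsMeander (m + 1) j l}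
  | .inl l => ⟨l.1 ++ [2], IsMeander.append_singleton_iff.2 ⟨l.2, .inl rfl, hj⟩⟩
  | .inr l => ⟨l.1 ++ [-3], IsMeander.append_singleton_iff.2 ⟨by simpa using l.2, .inr rfl, hj⟩⟩

theorem meanderAppendStep_bijective (m : ℕ) {j : ℤ} (hj : 0 ≤ j) :
    Function.Bijective (meanderAppendStep m hj) := by
  constructor
  · rintro (⟨l, _⟩ | ⟨l, _⟩) (⟨l', _⟩ | ⟨l', _⟩) hll' <;>
      simp_all [meanderAppendStep]
  · rintro ⟨l, hl⟩
    obtain rfl | ⟨l, x, rfl⟩ := l.eq_nil_or_concat'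
    · simpa using hl.1.symm
    obtain ⟨hl, rfl | rfl, -⟩ := IsMeander.append_singleton_iff.1 hl
    · exact ⟨.inl ⟨l, hl⟩, rfl⟩
    · exact ⟨.inr ⟨l, by simpa using hl⟩, rfl⟩

noncomputable def meanderAppendStepEquiv (m : ℕ) {j : ℤ} (hj : 0 ≤ j) :
    {l // IsMeander m (j - 2) l} ⊕ {l // IsMeander m (j + 3) l} ≃ {l // IsMeander (m + 1) j l} :=
  .ofBijective _ (meanderAppendStep_bijective m hj)

instance (m : ℕ) (j : ℤ) : Finite {l // IsMeander m j l} := by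
  induction m generalizing j with
  | zero =>
    have : Subsingleton {l // IsMeander 0 j l} := ⟨fun ⟨l, hl⟩ ⟨l', hl'⟩ =>
      Subtype.ext ((IsMeander.zero_iff.1 hl).1.trans (IsMeander.zero_iff.1 hl').1.symm)⟩
    infer_instance
  | succ m ih =>
    rcases lt_or_ge j 0 with hj | hj
    · have : IsEmpty {l // IsMeander (m + 1) j l} := ⟨fun ⟨_, hl⟩ => hl.nonneg.not_gt hj⟩
      infer_instance
    · exact .of_equiv _ (meanderAppendStepEquiv m hj)

noncomputable def meanderCount (m : ℕ) (j : ℤ) : ℕ := Nat.card {l // IsMeander m j l}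

theorem meanderCount_zero (j : ℤ) : meanderCount 0 j = if j = 0 then 1 else 0 := by
  split_ifs with hj
  · subst hj
    have : Unique {l // IsMeander 0 0 l} := ⟨⟨⟨[], IsMeander.zero_iff.2 ⟨rfl, rfl⟩⟩⟩,
      fun ⟨l, hl⟩ => Subtype.ext (IsMeander.zero_iff.1 hl).1⟩
    exact Nat.card_unique
  · have : IsEmpty {l // IsMeander 0 j l} := ⟨fun ⟨_, hl⟩ => hj (IsMeander.zero_iff.1 hl).2⟩
    exact Nat.card_of_isEmpty

theorem meanderCount_of_neg {m : ℕ} {j : ℤ} (hj : j < 0) : meanderCount m j = 0 :=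
  have : IsEmpty {l // IsMeander m j l} := ⟨fun ⟨_, hl⟩ => hl.nonneg.not_gt hj⟩
  Nat.card_of_isEmpty

theorem meanderCount_succ (m : ℕ) {j : ℤ} (hj : 0 ≤ j) :
    meanderCount (m + 1) j = meanderCount m (j - 2) + meanderCount m (j + 3) := by
  rw [meanderCount, ← Nat.card_congr (meanderAppendStepEquiv m hj), Nat.card_sum]
  rfl

theorem meanderCount_zero_of_not_dvd {m : ℕ} (hm : ¬ 5 ∣ m) : meanderCount m 0 = 0 :=
  have : IsEmpty {l // IsMeander m 0 l} := ⟨fun ⟨_, hl⟩ => hm (by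
    have := hl.modEq_two_mul
    simp only [Int.ModEq] at this
    omega)⟩
  Nat.card_of_isEmpty

noncomputable def meanderGF (j : ℕ) : ℤ⟦X⟧ := mk fun m => (meanderCount m j : ℤ)

theorem meanderGF_zero_eq_expand : meanderGF 0 = expand 5 (by norm_num) duchonGF := by
  ext m
  rw [coeff_expand]
  split_ifs with hm
  · obtain ⟨n, rfl⟩ := hm
    simp [meanderGF, duchonGF, meanderCount, IsMeander]
  · simp [meanderGF, meanderCount_zero_of_not_dvd hm]

theorem constantCoeff_meanderGF_zero : constantCoeff (meanderGF 0) = 1 := by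
  simp [meanderGF, meanderCount_zero]

-- The outer variable records the final height, the inner one (`C X`) the length.
noncomputable def meanderBGF : ℤ⟦X⟧⟦X⟧ := mk fun j => meanderGF j

theorem coeff_meanderBGF (j : ℕ) : coeff j meanderBGF = meanderGF j := coeff_mk _ _

theorem meanderBGF_eq :
    meanderBGF = 1 + C X * X ^ 2 * meanderBGF + C X * mk fun j => meanderGF (j + 3) := by
  ext j m
  simp only [coeff_meanderBGF, map_add, coeff_one, mul_assoc, coeff_C_mul, coeff_X_pow_mul',
    coeff_mk]
  cases m with
  | zero => simp [meanderGF, meanderCount_zero, apply_ite]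
  | succ m =>
    simp only [meanderGF, coeff_mk, meanderCount_succ m (Int.natCast_nonneg j), coeff_succ_X_mul]
    split_ifs with h0 h2 h2
    · omega
    · simp [meanderCount_of_neg (by omega : (j : ℤ) - 2 < 0)]
    · simp [Nat.cast_sub h2]
    · simp [meanderCount_of_neg (by omega : (j : ℤ) - 2 < 0)]

theorem kernel_mul_meanderBGF :
    (X ^ 3 - C X - C X * X ^ 5) * meanderBGF =
      X ^ 3 - C (X * meanderGF 2) * X ^ 2 - C (X * meanderGF 1) * X - C (X * meanderGF 0) := by
  have hsplit := eq_X_pow_mul_shift_add_trunc 3 meanderBGF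
  rw [trunc_three_eq] at hsplit
  simp only [coeff_meanderBGF] at hsplit
  rw [map_mul, map_mul, map_mul]
  linear_combination X ^ 3 * meanderBGF_eq - C X * hsplit

theorem isUnit_meanderBGF : IsUnit meanderBGF := by
  rw [isUnit_iff_constantCoeff, ← coeff_zero_eq_constantCoeff_apply, coeff_meanderBGF,
    isUnit_iff_constantCoeff, constantCoeff_meanderGF_zero]
  exact isUnit_one

theorem exists_kernel_factorization : ∃ n₀ n₁ n₂ : ℤ⟦X⟧,
    (X ^ 3 - C X - C X * X ^ 5 : ℤ⟦X⟧⟦X⟧) =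
      (X ^ 3 - C (X * meanderGF 2) * X ^ 2 - C (X * meanderGF 1) * X - C (X * meanderGF 0)) *
        (C n₀ + C n₁ * X + C n₂ * X ^ 2) := by
  obtain ⟨N, hMN⟩ := isUnit_meanderBGF.exists_right_inv
  have hKN : (X ^ 3 - C X - C X * X ^ 5 : ℤ⟦X⟧⟦X⟧) = (X ^ 3 - C (X * meanderGF 2) * X ^ 2 -
      C (X * meanderGF 1) * X - C (X * meanderGF 0)) * N := by
    rw [← kernel_mul_meanderBGF, mul_assoc, hMN, mul_one]
  have hrec (i : ℕ) : coeff (i + 3) N =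
      X * ∑ k ∈ Finset.range 3, meanderGF (2 - k) * coeff (i + k + 1 + 3) N := by
    have h := congrArg (coeff (i + 6)) hKN
    simp only [sub_mul, mul_assoc, map_sub, coeff_C_mul, coeff_X_pow_mul', coeff_X_pow, coeff_C,
      coeff_succ_X_mul] at h
    norm_num at h
    rw [if_neg (by omega), if_neg (by omega), show i + 6 - 3 = i + 3 by omega,
      show i + 6 - 2 = i + 4 by omega] at h
    simp only [Finset.sum_range_succ, Finset.sum_range_zero]
    show _ = X * (0 + meanderGF 2 * coeff (i + 4) N + meanderGF 1 * coeff (i + 5) N +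
      meanderGF 0 * coeff (i + 6) N)
    linear_combination -h
  have hshift : (mk fun i => coeff (i + 3) N) = 0 := by
    ext1 i
    simpa using eq_zero_of_forall_eq_X_mul_sum (x := fun i => coeff (i + 3) N) hrec i
  refine ⟨coeff 0 N, coeff 1 N, coeff 2 N, ?_⟩
  rw [hKN, ← trunc_three_eq]
  congr
  simpa [hshift] using eq_X_pow_mul_shift_add_trunc 3 N

theorem meanderGF_zero_relation :
    (X : ℤ⟦X⟧) ^ 2 * (1 + (X * meanderGF 0) ^ 5) ^ 2 -
      X * (X * meanderGF 0) * (1 + (X * meanderGF 0) ^ 5) + (X * meanderGF 0) ^ 7 = 0 := by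
  obtain ⟨n₀, n₁, n₂, h⟩ := exists_kernel_factorization
  obtain ⟨ha, hb, hc⟩ := eqns_of_kernel_factorization h
  have hA : meanderGF 0 ≠ 0 := fun h0 => by simpa [h0] using constantCoeff_meanderGF_zero
  exact relation_of_kernel_eqns X_ne_zero (mul_ne_zero X_ne_zero hA) ha hb hc

theorem duchon_minimalPolynomial :
    1 - duchonGF + 2 * X * duchonGF ^ 5 - X * duchonGF ^ 6 + X * duchonGF ^ 7
      + X ^ 2 * duchonGF ^ 10 = 0 := by
  have hexpand : expand 5 (by norm_num) (1 - duchonGF + 2 * X * duchonGF ^ 5 - X * duchonGF ^ 6 +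
      X * duchonGF ^ 7 + X ^ 2 * duchonGF ^ 10) = 0 := by
    refine mul_left_cancel₀ (pow_ne_zero 2 (X_ne_zero (R := ℤ))) ?_
    simp only [map_add, map_sub, map_mul, map_pow, map_one, map_ofNat, expand_X,
      ← meanderGF_zero_eq_expand]
    linear_combination meanderGF_zero_relation
  ext n
  rw [← coeff_expand_mul 5 (by norm_num), hexpand, map_zero, map_zero]
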